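/- Let k be a field of characteristic zero, R = MvPolynomial σ k (σ finite), I an ideal, b ≥ 1, and m a k-rational maximal ideal with I ⊆ m^b. Define the coefficient ideal C(I) = Σ_{i=0}^{b−1} (Δ^i(I))^{b!/(b−i)}. Then C(I) ⊆ m^{b!}. -/

import Mathlib

open MvPolynomial

/-- The derivative extension `Δ(I) = I + (∂f/∂X_i : f ∈ I, i)` of an ideal of a
multivariate polynomial ring. -/
noncomputable def deltaIdeal {k : Type*} [Field k] {σ : Type*} [Fintype σ]
    (I : Ideal (MvPolynomial σ k)) : Ideal (MvPolynomial σ k) :=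
  I ⊔ Ideal.span {g | ∃ f ∈ I, ∃ i : σ, g = pderiv i f}

/-!
Each partial derivative lowers the `m`-adic order by at most one (Leibniz rule), so
`Δ^i(I) ⊆ m^(b-i)`, and raising to the power `b!/(b-i)` lands in `m^{b!}`.
-/

theorem Derivation.map_mem_pow_succ {R A : Type*} [CommRing R] [CommRing A] [Algebra R A]
    (D : Derivation R A A) {J : Ideal A} (n : ℕ) {x : A} (hx : x ∈ J ^ (n + 1)) :
    D x ∈ J ^ n := by
  induction n generalizing x with
  | zero => simp
  | succ n ih =>
    rw [pow_succ] at hx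
    refine Submodule.mul_induction_on hx (fun a ha c hc => ?_) fun _ _ => by
      rw [map_add]; exact add_mem
    rw [Derivation.leibniz, smul_eq_mul, smul_eq_mul, mul_comm c, pow_succ]
    exact add_mem (Ideal.mul_mem_right _ _ ha) (Ideal.mul_mem_mul (ih ha) hc)

theorem Derivation.map_mem_pow_pred {R A : Type*} [CommRing R] [CommRing A] [Algebra R A]
    (D : Derivation R A A) {J : Ideal A} {n : ℕ} {x : A} (hx : x ∈ J ^ n) :
    D x ∈ J ^ (n - 1) := by
  cases n with
  | zero => simp
  | succ n => exact D.map_mem_pow_succ n hx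

theorem deltaIdeal_le_pow_pred {k : Type*} [Field k] {σ : Type*} [Fintype σ]
    {I J : Ideal (MvPolynomial σ k)} {n : ℕ} (hI : I ≤ J ^ n) :
    deltaIdeal I ≤ J ^ (n - 1) := by
  refine sup_le (hI.trans (Ideal.pow_le_pow_right (n.sub_le 1))) ?_
  rw [Ideal.span_le]
  rintro _ ⟨f, hf, i, rfl⟩
  exact (pderiv i).map_mem_pow_pred (hI hf)

theorem iterate_deltaIdeal_le_pow_sub {k : Type*} [Field k] {σ : Type*} [Fintype σ]
    {I J : Ideal (MvPolynomial σ k)} {n : ℕ} (hI : I ≤ J ^ n) (i : ℕ) :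
    deltaIdeal^[i] I ≤ J ^ (n - i) := by
  induction i with
  | zero => simpa using hI
  | succ i ih =>
    rw [Function.iterate_succ_apply', ← Nat.sub_sub]
    exact deltaIdeal_le_pow_pred ih

theorem coefficient_ideal_le_pow_factorial_general
    {k : Type*} [Field k] {σ : Type*} [Fintype σ]
    (I : Ideal (MvPolynomial σ k)) (b : ℕ) (a : σ → k)
    (hI : I ≤ (Ideal.span (Set.range fun i : σ => X i - C (a i))) ^ b) :
    (∑ i ∈ Finset.range b, ((deltaIdeal)^[i] I) ^ (Nat.factorial b / (b - i))) ≤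
      (Ideal.span (Set.range fun i : σ => X i - C (a i))) ^ (Nat.factorial b) := by
  set m := Ideal.span (Set.range fun i : σ => X i - C (a i))
  rw [Ideal.sum_eq_sup]
  refine Finset.sup_le fun i hi => ?_
  have hdvd : b - i ∣ b.factorial :=
    Nat.dvd_factorial (Nat.sub_pos_of_lt (Finset.mem_range.mp hi)) (b.sub_le i)
  calc (deltaIdeal^[i] I) ^ (b.factorial / (b - i))
      ≤ (m ^ (b - i)) ^ (b.factorial / (b - i)) :=
        Ideal.pow_right_mono (iterate_deltaIdeal_le_pow_sub hI i) _
    _ = m ^ b.factorial := by rw [← pow_mul, Nat.mul_div_cancel' hdvd]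

/-- if `I ⊆ m^b` at a rational point, then the coefficient ideal
`C(I) = Σ_{i<b} (Δ^i(I))^{b!/(b−i)}` is contained in `m^{b!}`. -/
theorem coefficient_ideal_le_pow_factorial
    {k : Type*} [Field k] [CharZero k] {σ : Type*} [Fintype σ]
    (I : Ideal (MvPolynomial σ k)) (b : ℕ) (hb : 1 ≤ b) (a : σ → k)
    (hI : I ≤ (Ideal.span (Set.range fun i : σ => X i - C (a i))) ^ b) :
    (∑ i ∈ Finset.range b, ((deltaIdeal)^[i] I) ^ (Nat.factorial b / (b - i))) ≤
      (Ideal.span (Set.range fun i : σ => X i - C (a i))) ^ (Nat.factorial b) :=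
  coefficient_ideal_le_pow_factorial_general I b a hI
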